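/- Let m,N≥1 be integers, α>1, L>0, B≥1, η≥0. Let E⊆{x∈ℤ^m : |x|<N} and let T,T':E×E→ℂ be matrices. Assume: (i) T is invertible and |T^{−1}(x,x')| ≤ B e^{−αL|x−x'|_α} for all x,x'∈E; (ii) |T'(x,x')−T(x,x')| ≤ η e^{−αL|x−x'|_α} for all x,x'∈E; and (iii) η·(2N)^{2m+1}·B² ≤ 1/2. Then T' is invertible and |T'^{−1}(x,x')| ≤ 2B e^{−αL|x−x'|_α} for all x,x'∈E. -/

import Mathlib

open scoped BigOperators

noncomputable section

/-- `|x|_α = Σ_j |x_j|^{1/α}` for an integer vector. -/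
def adist (α : ℝ) {m : ℕ} (x : Fin m → ℤ) : ℝ :=
  ∑ j, |(x j : ℝ)| ^ (1 / α)

/-!
Write `T' = T (1 - X)` with `X = T⁻¹ (T - T')`. The weight `w x y = e^{-αL|x-y|_α}` is
submultiplicative because `t ↦ t^{1/α}` is subadditive, so a product of two matrices dominated
entrywise by `c w` and `d w` is dominated by `|E| c d w`. Hence `X` is dominated by `|E| B η w`,
its row-sum norm is at most `ε = |E|² η B`, which is `≤ 1/2` as `|E| ≤ (2N)^m`, and the Neumann
series `T'⁻¹ = Σ_k X^k T⁻¹` is dominated term by term by `ε^k B w`, which sums to at most `2 B w`.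
-/

attribute [local instance] Matrix.linftyOpSeminormedAddCommGroup Matrix.linftyOpNormedRing

lemma adist_nonneg (α : ℝ) {m : ℕ} (x : Fin m → ℤ) : 0 ≤ adist α x :=
  Finset.sum_nonneg fun _ _ => Real.rpow_nonneg (abs_nonneg _) _

lemma adist_add_le {α : ℝ} (hα : 1 ≤ α) {m : ℕ} (x y : Fin m → ℤ) :
    adist α (x + y) ≤ adist α x + adist α y := by
  have hp : 1 / α ≤ 1 := (div_le_one (by linarith)).2 hα
  rw [adist, adist, adist, ← Finset.sum_add_distrib]
  refine Finset.sum_le_sum fun j _ => ?_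
  calc |((x + y) j : ℝ)| ^ (1 / α) ≤ (|(x j : ℝ)| + |(y j : ℝ)|) ^ (1 / α) := by
        gcongr
        simp only [Pi.add_apply, Int.cast_add]
        exact abs_add_le _ _
    _ ≤ _ := Real.rpow_add_le_add_rpow (abs_nonneg _) (abs_nonneg _) (by positivity) hp

def expWeight (α L : ℝ) {m : ℕ} (x y : Fin m → ℤ) : ℝ :=
  Real.exp (-(α * L * adist α (x - y)))

structure IsSubmultiplicativeWeight {ι : Type*} (w : ι → ι → ℝ) : Prop where
  nonneg : ∀ i j, 0 ≤ w i j
  mul_le : ∀ i j k, w i j * w j k ≤ w i k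

lemma IsSubmultiplicativeWeight.comp {ι κ : Type*} {w : ι → ι → ℝ}
    (hw : IsSubmultiplicativeWeight w) (f : κ → ι) :
    IsSubmultiplicativeWeight fun a b => w (f a) (f b) :=
  ⟨fun _ _ => hw.nonneg _ _, fun _ _ _ => hw.mul_le _ _ _⟩

lemma expWeight_le_one {α L : ℝ} (hα : 0 ≤ α) (hL : 0 ≤ L) {m : ℕ} (x y : Fin m → ℤ) :
    expWeight α L x y ≤ 1 :=
  Real.exp_le_one_iff.2 <| neg_nonpos.2 <| mul_nonneg (mul_nonneg hα hL) (adist_nonneg _ _)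

lemma isSubmultiplicativeWeight_expWeight {α L : ℝ} (hα : 1 ≤ α) (hL : 0 ≤ L) (m : ℕ) :
    IsSubmultiplicativeWeight (expWeight α L (m := m)) where
  nonneg _ _ := (Real.exp_pos _).le
  mul_le x y z := by
    rw [expWeight, expWeight, expWeight, ← Real.exp_add, Real.exp_le_exp]
    have htri := adist_add_le hα (x - y) (y - z)
    rw [sub_add_sub_cancel] at htri
    nlinarith [mul_le_mul_of_nonneg_left htri (mul_nonneg (by linarith : (0 : ℝ) ≤ α) hL)]

lemma Finset.card_le_of_forall_abs_lt {m N : ℕ} {E : Finset (Fin m → ℤ)}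
    (hE : ∀ x ∈ E, ∀ j, |x j| < (N : ℤ)) : E.card ≤ (2 * N) ^ m := by
  have hsub : E ⊆ Fintype.piFinset fun _ => Finset.Ioo (-(N : ℤ)) N := fun x hx =>
    Fintype.mem_piFinset.2 fun j => Finset.mem_Ioo.2 (abs_lt.1 (hE x hx j))
  calc E.card ≤ (Fintype.piFinset fun _ : Fin m => Finset.Ioo (-(N : ℤ)) N).card :=
        Finset.card_le_card hsub
    _ ≤ (2 * N) ^ m := by
        rw [Fintype.card_piFinset, Finset.prod_const, Finset.card_univ, Fintype.card_fin,
          Int.card_Ioo]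
        exact Nat.pow_le_pow_left (by omega) m

namespace Matrix

variable {ι : Type*} {w : ι → ι → ℝ} {c d : ℝ}

def HasDecay {α : Type*} [Norm α] (w : ι → ι → ℝ) (c : ℝ) (A : Matrix ι ι α) : Prop :=
  ∀ i j, ‖A i j‖ ≤ c * w i j

lemma HasDecay.mono {α : Type*} [Norm α] {A : Matrix ι ι α} (h : HasDecay w c A)
    (hw : ∀ i j, 0 ≤ w i j) (hcd : c ≤ d) : HasDecay w d A :=
  fun i j => (h i j).trans (mul_le_mul_of_nonneg_right hcd (hw i j))

lemma HasDecay.neg {α : Type*} [SeminormedAddGroup α] {A : Matrix ι ι α} (h : HasDecay w c A) :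
    HasDecay w c (-A) := fun i j => by
  rw [neg_apply, norm_neg]
  exact h i j

lemma HasDecay.mul [Fintype ι] {α : Type*} [NonUnitalSeminormedRing α] {A B : Matrix ι ι α}
    (hw : IsSubmultiplicativeWeight w) (hA : HasDecay w c A) (hB : HasDecay w d B)
    (hc : 0 ≤ c) (hd : 0 ≤ d) : HasDecay w (Fintype.card ι * c * d) (A * B) := fun i j => by
  have hterm : ∀ k, ‖A i k * B k j‖ ≤ c * d * w i j := fun k => calc
    ‖A i k * B k j‖ ≤ (c * w i k) * (d * w k j) :=
      (norm_mul_le _ _).trans <| mul_le_mul (hA i k) (hB k j) (norm_nonneg _)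
        (mul_nonneg hc (hw.nonneg i k))
    _ = c * d * (w i k * w k j) := by ring
    _ ≤ c * d * w i j := mul_le_mul_of_nonneg_left (hw.mul_le i k j) (mul_nonneg hc hd)
  calc ‖(A * B) i j‖ ≤ ∑ k, ‖A i k * B k j‖ := by
        rw [mul_apply]
        exact norm_sum_le _ _
    _ ≤ ∑ _k : ι, c * d * w i j := Finset.sum_le_sum fun k _ => hterm k
    _ = Fintype.card ι * c * d * w i j := by
        rw [Finset.sum_const, Finset.card_univ, nsmul_eq_mul]
        ring

lemma HasDecay.pow_mul [Fintype ι] [DecidableEq ι] {α : Type*} [SeminormedRing α]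
    {A B : Matrix ι ι α} (hw : IsSubmultiplicativeWeight w) (hA : HasDecay w c A)
    (hB : HasDecay w d B) (hc : 0 ≤ c) (hd : 0 ≤ d) (k : ℕ) :
    HasDecay w ((Fintype.card ι * c) ^ k * d) (A ^ k * B) := by
  induction k with
  | zero => simpa using hB
  | succ k ih =>
    simpa only [pow_succ', mul_assoc] using hA.mul hw ih hc (by positivity)

lemma HasDecay.linfty_opNorm_le [Fintype ι] {α : Type*} [SeminormedAddCommGroup α]
    {A : Matrix ι ι α} (h : HasDecay w c A) (hw : ∀ i j, w i j ≤ 1) (hc : 0 ≤ c) :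
    ‖A‖ ≤ Fintype.card ι * c := by
  have hrow : ∀ i, ∑ j, ‖A i j‖ ≤ Fintype.card ι * c := fun i => calc
    ∑ j, ‖A i j‖ ≤ ∑ _j : ι, c :=
      Finset.sum_le_sum fun j _ => (h i j).trans (mul_le_of_le_one_right hc (hw i j))
    _ = Fintype.card ι * c := by simp
  rw [linfty_opNorm_def, ← NNReal.coe_mk _ (by positivity : (0 : ℝ) ≤ Fintype.card ι * c),
    NNReal.coe_le_coe, Finset.sup_le_iff]
  intro i _
  rw [← NNReal.coe_le_coe]
  push_cast
  exact hrow i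

lemma HasDecay.of_hasSum {α β : Type*} [SeminormedAddCommGroup α] {f : β → Matrix ι ι α}
    {S : Matrix ι ι α} {a : β → ℝ} {s : ℝ} (hf : HasSum f S) (ha : HasSum a s)
    (h : ∀ k, HasDecay w (a k) (f k)) : HasDecay w s S := fun i j =>
  (Pi.hasSum.1 (Pi.hasSum.1 hf i) j).norm_le_of_bounded (ha.mul_right (w i j)) fun k => h k i j

theorem isUnit_and_hasDecay_inv_of_hasDecay_sub [Fintype ι] [DecidableEq ι] {𝕜 : Type*}
    [NormedCommRing 𝕜] [CompleteSpace 𝕜] (hw : IsSubmultiplicativeWeight w)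
    (hw_le_one : ∀ i j, w i j ≤ 1)
    {T T' : Matrix ι ι 𝕜} {B η : ℝ} (hB : 0 ≤ B) (hη : 0 ≤ η) (hT : IsUnit T)
    (hTinv : HasDecay w B T⁻¹) (hdiff : HasDecay w η (T' - T))
    (hε : (Fintype.card ι : ℝ) ^ 2 * η * B < 1) :
    IsUnit T' ∧ HasDecay w ((1 - Fintype.card ι ^ 2 * η * B)⁻¹ * B) T'⁻¹ := by
  -- the row-sum norm induces the product uniformity
  have : @CompleteSpace (Matrix ι ι 𝕜) PseudoMetricSpace.toUniformSpace :=
    inferInstanceAs (CompleteSpace (ι → ι → 𝕜))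
  set X := T⁻¹ * (T - T')
  have hX : HasDecay w (Fintype.card ι * B * η) X := by
    refine hTinv.mul hw ?_ hB hη
    rw [← neg_sub]
    exact hdiff.neg
  have hXnorm : ‖X‖ < 1 := by
    refine (hX.linfty_opNorm_le hw_le_one (by positivity)).trans_lt (lt_of_eq_of_lt ?_ hε)
    ring
  have hfact : T' = T * (1 - X) := by
    rw [mul_sub, mul_one, ← mul_assoc, mul_nonsing_inv _ ((isUnit_iff_isUnit_det _).1 hT),
      one_mul, sub_sub_cancel]
  refine ⟨hfact ▸ hT.mul (isUnit_one_sub_of_norm_lt_one hXnorm), ?_⟩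
  have hsum : HasSum (fun k => X ^ k * T⁻¹) T'⁻¹ := by
    rw [hfact, mul_inv_rev, nonsing_inv_eq_ringInverse (1 - X)]
    exact (hasSum_geom_series_inverse X hXnorm).mul_right _
  refine HasDecay.of_hasSum hsum
    ((hasSum_geometric_of_lt_one (by positivity) hε).mul_right B) fun k => ?_
  refine (hX.pow_mul hw hTinv (by positivity) hB k).mono hw.nonneg (le_of_eq ?_)
  ring

end Matrix

theorem inverse_stable_pointwise_decay_general {m N : ℕ} (hN : 1 ≤ N)
    {α L B η : ℝ} (hα : 1 < α) (hL : 0 < L) (hB : 1 ≤ B) (hη : 0 ≤ η)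
    (E : Finset (Fin m → ℤ)) (hE : ∀ x ∈ E, ∀ j, |x j| < (N : ℤ))
    (T T' : Matrix E E ℂ)
    (hTunit : IsUnit T)
    (hTdecay : ∀ x x' : E,
      ‖T⁻¹ x x'‖ ≤ B * Real.exp (-(α * L * adist α ((x : Fin m → ℤ) - (x' : Fin m → ℤ)))))
    (hdiff : ∀ x x' : E, ‖T' x x' - T x x'‖ ≤
      η * Real.exp (-(α * L * adist α ((x : Fin m → ℤ) - (x' : Fin m → ℤ)))))
    (hsmall : η * (2 * (N : ℝ)) ^ (2 * m + 1) * B ^ 2 ≤ 1 / 2) :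
    IsUnit T' ∧
      ∀ x x' : E, ‖T'⁻¹ x x'‖ ≤
        2 * B * Real.exp (-(α * L * adist α ((x : Fin m → ℤ) - (x' : Fin m → ℤ)))) := by
  have hw := (isSubmultiplicativeWeight_expWeight hα.le hL.le m).comp ((↑) : E → Fin m → ℤ)
  have hw_le_one : ∀ x x' : E, expWeight α L (x : Fin m → ℤ) x' ≤ 1 :=
    fun x x' => expWeight_le_one (by linarith) hL.le _ _
  have hcard : (Fintype.card E : ℝ) ≤ (2 * N) ^ m := by
    rw [Fintype.card_coe]
    exact_mod_cast E.card_le_of_forall_abs_lt hE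
  have h2NB : 1 ≤ 2 * (N : ℝ) * B :=
    one_le_mul_of_one_le_of_one_le (by norm_cast; omega) hB
  have hε : (Fintype.card E : ℝ) ^ 2 * η * B ≤ 1 / 2 := calc
    _ ≤ ((2 * N : ℝ) ^ m) ^ 2 * η * B := by gcongr
    _ ≤ ((2 * N : ℝ) ^ m) ^ 2 * η * B * (2 * N * B) :=
        le_mul_of_one_le_right (by positivity) h2NB
    _ = η * (2 * N) ^ (2 * m + 1) * B ^ 2 := by ring
    _ ≤ 1 / 2 := hsmall
  obtain ⟨hunit, hdecay⟩ := Matrix.isUnit_and_hasDecay_inv_of_hasDecay_sub hw hw_le_one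
    (by linarith) hη hTunit hTdecay hdiff (by linarith)
  refine ⟨hunit, hdecay.mono hw.nonneg (mul_le_mul_of_nonneg_right ?_ (by linarith))⟩
  rw [inv_le_comm₀ (by linarith) two_pos]
  linarith

/-- stability of pointwise off-diagonal decay of the inverse
under a small perturbation. -/
theorem inverse_stable_pointwise_decay {m N : ℕ} (hm : 1 ≤ m) (hN : 1 ≤ N)
    {α L B η : ℝ} (hα : 1 < α) (hL : 0 < L) (hB : 1 ≤ B) (hη : 0 ≤ η)
    (E : Finset (Fin m → ℤ)) (hE : ∀ x ∈ E, ∀ j, |x j| < (N : ℤ))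
    (T T' : Matrix E E ℂ)
    (hTunit : IsUnit T)
    (hTdecay : ∀ x x' : E,
      ‖T⁻¹ x x'‖ ≤ B * Real.exp (-(α * L * adist α ((x : Fin m → ℤ) - (x' : Fin m → ℤ)))))
    (hdiff : ∀ x x' : E, ‖T' x x' - T x x'‖ ≤
      η * Real.exp (-(α * L * adist α ((x : Fin m → ℤ) - (x' : Fin m → ℤ)))))
    (hsmall : η * (2 * (N : ℝ)) ^ (2 * m + 1) * B ^ 2 ≤ 1 / 2) :
    IsUnit T' ∧
      ∀ x x' : E, ‖T'⁻¹ x x'‖ ≤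
        2 * B * Real.exp (-(α * L * adist α ((x : Fin m → ℤ) - (x' : Fin m → ℤ)))) :=
  inverse_stable_pointwise_decay_general hN hα hL hB hη E hE T T' hTunit hTdecay hdiff hsmall
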